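/- Let X be a compact Hausdorff topological space, let f, g : X → ℝ be continuous nonnegative functions, and let r ≥ 0. Suppose the set V_r = {x ∈ X | f(x) ≤ r·g(x)} has finitely many connected components. Then there exists ε > 0 such that for every s ∈ [r, r+ε], the map on sets of connected components π₀(V_r) → π₀(V_s) induced by the inclusion V_r ⊆ V_s = {x ∈ X | f(x) ≤ s·g(x)} is injective. -/
import Mathlib

open Set Topology Filter

/-- A connected component within a closed set is closed. -/
lemma aux_isClosed_connectedComponentIn {X : Type*} [TopologicalSpace X] {F : Set X}
    (hF : IsClosed F) (x : X) : IsClosed (connectedComponentIn F x) := by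
  by_cases hx : x ∈ F
  · rw [connectedComponentIn_eq_image hx]
    exact hF.isClosedEmbedding_subtypeVal.isClosedMap _ isClosed_connectedComponent
  · rw [connectedComponentIn_eq_empty hx]
    exact isClosed_empty

/-- Shrinking lemma: any open set containing `V r` contains `V s` for `s ≤ r + ε`. -/
lemma aux_shrink {X : Type*} [TopologicalSpace X] [CompactSpace X]
    (f g : X → ℝ) (hf : Continuous f) (hg : Continuous g) (hg0 : ∀ x, 0 ≤ g x) (r : ℝ)
    {U : Set X} (hU : IsOpen U) (hsub : {x | f x ≤ r * g x} ⊆ U) :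
    ∃ ε > 0, ∀ s ≤ r + ε, {x | f x ≤ s * g x} ⊆ U := by
  set K : ℕ → Set X := fun n => {x | f x ≤ (r + 1 / (n + 1)) * g x} ∩ Uᶜ with hK
  have hKclosed : ∀ n, IsClosed (K n) :=
    fun n => (isClosed_le hf (continuous_const.mul hg)).inter hU.isClosed_compl
  have hstep : ∀ n, K (n + 1) ⊆ K n := by
    intro n x ⟨hx1, hx2⟩
    refine ⟨le_trans hx1 (mul_le_mul_of_nonneg_right ?_ (hg0 x)), hx2⟩
    have h1 : (1 : ℝ) / (n + 1 + 1) ≤ 1 / (n + 1) :=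
      one_div_le_one_div_of_le (by positivity) (by linarith)
    push_cast
    linarith
  have hnot : ¬ ∀ n, (K n).Nonempty := by
    intro hne
    obtain ⟨x, hx⟩ := IsCompact.nonempty_iInter_of_sequence_nonempty_isCompact_isClosed
      K hstep hne (hKclosed 0).isCompact hKclosed
    simp only [mem_iInter, hK, mem_inter_iff, mem_setOf_eq, mem_compl_iff] at hx
    have hxU : x ∉ U := (hx 0).2
    apply hxU
    apply hsub
    have hlim : Tendsto (fun n : ℕ => (r + 1 / (n + 1)) * g x) atTop (𝓝 ((r + 0) * g x)) :=
      ((tendsto_const_nhds.add tendsto_one_div_add_atTop_nhds_zero_nat).mul tendsto_const_nhds)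
    have := ge_of_tendsto' hlim (fun n => (hx n).1)
    simpa using this
  push_neg at hnot
  obtain ⟨n, hn⟩ := hnot
  refine ⟨1 / (n + 1), by positivity, fun s hs x hx => ?_⟩
  by_contra hxU
  exact (Set.not_nonempty_iff_eq_empty.mpr hn).elim
    (⟨x, le_trans hx (mul_le_mul_of_nonneg_right hs (hg0 x)), hxU⟩ : (K n).Nonempty)

/-- Abstract topological version of Lemma 1: for `V s = {x | f x ≤ s * g x}`, if `V r` has
finitely many connected components, then for `s` slightly larger than `r` the induced map
`π₀(V r) → π₀(V s)` is injective. Injectivity is phrased via `connectedComponentIn`. -/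
theorem stmt0 {X : Type*} [TopologicalSpace X] [CompactSpace X] [T2Space X]
    (f g : X → ℝ) (hf : Continuous f) (hg : Continuous g)
    (hf0 : ∀ x, 0 ≤ f x) (hg0 : ∀ x, 0 ≤ g x) (r : ℝ) (hr : 0 ≤ r)
    (hfin : {C : Set X | ∃ x ∈ {x | f x ≤ r * g x},
        C = connectedComponentIn {x | f x ≤ r * g x} x}.Finite) :
    ∃ ε > 0, ∀ s, r ≤ s → s ≤ r + ε →
      ∀ x ∈ {x | f x ≤ r * g x}, ∀ y ∈ {x | f x ≤ r * g x},
        connectedComponentIn {x | f x ≤ s * g x} x =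
          connectedComponentIn {x | f x ≤ s * g x} y →
        connectedComponentIn {x | f x ≤ r * g x} x =
          connectedComponentIn {x | f x ≤ r * g x} y := by
  classical
  set Vr : Set X := {x | f x ≤ r * g x} with hVr
  have hVrclosed : IsClosed Vr := isClosed_le hf (continuous_const.mul hg)
  -- the finite set of components
  set S : Set (Set X) := {C : Set X | ∃ x ∈ Vr, C = connectedComponentIn Vr x} with hS
  -- every component is closed
  have hcomp_closed : ∀ C ∈ S, IsClosed C := by
    rintro C ⟨x, hx, rfl⟩
    exact aux_isClosed_connectedComponentIn hVrclosed x
  -- V r ⊆ V s for r ≤ s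
  have hmono : ∀ s, r ≤ s → Vr ⊆ {x | f x ≤ s * g x} := fun s hs x hx =>
    le_trans hx (mul_le_mul_of_nonneg_right hs (hg0 x))
  -- key: per-component uniform ε
  have key : ∀ C ∈ hfin.toFinset, ∃ ε > 0, ∀ s, r ≤ s → s ≤ r + ε →
      ∀ x ∈ C, ∀ y ∈ Vr,
        connectedComponentIn {x | f x ≤ s * g x} x =
          connectedComponentIn {x | f x ≤ s * g x} y → y ∈ C := by
    intro C hC
    rw [Set.Finite.mem_toFinset] at hC
    obtain ⟨x0, hx0, rfl⟩ := hC
    set C := connectedComponentIn Vr x0 with hCdef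
    have hCsub : C ⊆ Vr := connectedComponentIn_subset Vr x0
    have hCclosed : IsClosed C := aux_isClosed_connectedComponentIn hVrclosed x0
    -- the complement of C in Vr is a finite union of components, hence closed
    set T : Set (Set X) := {E ∈ S | ∃ y ∈ Vr \ C, E = connectedComponentIn Vr y} with hT
    have hDeq : Vr \ C = ⋃ E ∈ T, E := by
      ext z
      constructor
      · intro ⟨hz, hzC⟩
        exact Set.mem_biUnion ⟨⟨z, hz, rfl⟩, ⟨z, ⟨hz, hzC⟩, rfl⟩⟩
          (mem_connectedComponentIn hz)
      · simp only [Set.mem_iUnion]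
        rintro ⟨E, ⟨-, y, ⟨hy, hyC⟩, rfl⟩, hz⟩
        refine ⟨(connectedComponentIn_subset Vr y) hz, fun hzC => hyC ?_⟩
        have h1 : connectedComponentIn Vr y = connectedComponentIn Vr z :=
          connectedComponentIn_eq hz
        have h2 : connectedComponentIn Vr x0 = connectedComponentIn Vr z :=
          connectedComponentIn_eq hzC
        rw [hCdef, h2, ← h1]
        exact mem_connectedComponentIn hy
    have hDclosed : IsClosed (Vr \ C) := by
      rw [hDeq]
      exact Set.Finite.isClosed_biUnion (hfin.subset fun E hE => hE.1)
        (fun E hE => hcomp_closed E hE.1)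
    -- separate C and Vr \ C by disjoint open sets
    obtain ⟨A, B, hA, hB, hCA, hDB, hAB⟩ :=
      SeparatedNhds.of_isCompact_isCompact hCclosed.isCompact hDclosed.isCompact
        disjoint_sdiff_right
    have hVrAB : Vr ⊆ A ∪ B := fun z hz => by
      by_cases hzC : z ∈ C
      · exact Or.inl (hCA hzC)
      · exact Or.inr (hDB ⟨hz, hzC⟩)
    obtain ⟨ε, hεpos, hε⟩ := aux_shrink f g hf hg hg0 r (hA.union hB) hVrAB
    refine ⟨ε, hεpos, fun s hs hs' x hx y hy hxy => ?_⟩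
    set Vs : Set X := {x | f x ≤ s * g x} with hVs
    have hVsub : Vs ⊆ A ∪ B := hε s hs'
    have hxVs : x ∈ Vs := hmono s hs (hCsub hx)
    have hyVs : y ∈ Vs := hmono s hs hy
    set W := connectedComponentIn Vs x with hW
    have hxW : x ∈ W := mem_connectedComponentIn hxVs
    have hWA : W ⊆ A := by
      refine isPreconnected_connectedComponentIn.subset_left_of_subset_union hA hB hAB
        ((connectedComponentIn_subset Vs x).trans hVsub) ⟨x, hxW, hCA hx⟩
    have hyW : y ∈ W := by
      show y ∈ W
      rw [hxy]
      exact mem_connectedComponentIn hyVs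
    by_contra hyC
    exact (Set.disjoint_left.mp hAB (hWA hyW)) (hDB ⟨hy, hyC⟩)
  choose! ε hεpos hεkey using key
  rcases hfin.toFinset.eq_empty_or_nonempty with hne | hne
  · refine ⟨1, one_pos, fun s _ _ x hx y _ _ => ?_⟩
    exfalso
    have : connectedComponentIn Vr x ∈ hfin.toFinset := by
      rw [Set.Finite.mem_toFinset]; exact ⟨x, hx, rfl⟩
    rw [hne] at this
    exact absurd this (Finset.notMem_empty _)
  · refine ⟨hfin.toFinset.inf' hne ε, ?_, fun s hs hs' x hx y hy hxy => ?_⟩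
    · simp only [gt_iff_lt, Finset.lt_inf'_iff]
      exact fun C hC => hεpos C hC
    · have hCmem : connectedComponentIn Vr x ∈ hfin.toFinset := by
        rw [Set.Finite.mem_toFinset]; exact ⟨x, hx, rfl⟩
      have hεle : hfin.toFinset.inf' hne ε ≤ ε (connectedComponentIn Vr x) :=
        Finset.inf'_le ε hCmem
      have hyC : y ∈ connectedComponentIn Vr x :=
        hεkey _ hCmem s hs (hs'.trans (by linarith)) x (mem_connectedComponentIn hx) y hy hxy
      exact connectedComponentIn_eq hyC
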